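/- Let K ⊂ ℝⁿ be compact, V : ℝⁿ → ℝ continuous and nonnegative on K, A ∈ ℝ^{n×n}, and let g : ℝⁿ → ℝⁿ satisfy g(K) ⊆ K and V(g(y)) ≤ γ̄ V(y) for all y ∈ K, where 0 < γ̄ < 1. Fix any γ ∈ (γ̄, 1). Then for every μ > 0 there exists δ > 0 such that for all x ∈ K and all e, d ∈ ℝⁿ with ‖e‖ ≤ δ and ‖d‖ ≤ δ, if x + e ∈ K and the perturbed successor x⁺ := g(x+e) − A e + d lies in K, then V(x⁺) ≤ max{μ, γ V(x)}. -/

import Mathlib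

open scoped Matrix

/-- Matrix-vector product, viewed as a map on Euclidean space. -/
def matVec {n : ℕ} (A : Matrix (Fin n) (Fin n) ℝ) (x : EuclideanSpace ℝ (Fin n)) :
    EuclideanSpace ℝ (Fin n) :=
  WithLp.toLp 2 (A.mulVec (WithLp.ofLp x))

/-!
Uniform continuity of `V` on the compact set `K` bounds both perturbations by one `ε`:
`V (x + e) ≤ V x + ε` and `V x⁺ ≤ V (g (x + e)) + ε`, so `V x⁺ ≤ γ̄ V x + (1 + γ̄) ε`. An additive
error `c` is absorbed by `max μ (γ V x)`: either the slack `(γ - γ̄) V x` dominates it, or `V x` is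
so small that `γ̄ V x + c ≤ μ`, provided `γ c ≤ μ (γ - γ̄)`.
-/

lemma matVec_eq_toEuclideanCLM {n : ℕ} (A : Matrix (Fin n) (Fin n) ℝ)
    (x : EuclideanSpace ℝ (Fin n)) : matVec A x = Matrix.toEuclideanCLM (𝕜 := ℝ) A x :=
  rfl

lemma add_le_max_of_mul_le {γbar γ μ v c : ℝ} (hγbar : 0 ≤ γbar) (hγ : γbar < γ)
    (hc : γ * c ≤ μ * (γ - γbar)) : γbar * v + c ≤ max μ (γ * v) := by
  rcases le_or_gt c ((γ - γbar) * v) with hv | hv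
  · exact le_max_of_le_right (by linarith)
  · refine le_max_of_le_left ?_
    nlinarith [mul_le_mul_of_nonneg_left hv.le hγbar]

theorem IsCompact.exists_pos_forall_le_max_of_dist_le {X : Type*} [PseudoMetricSpace X]
    {K : Set X} (hK : IsCompact K) {V : X → ℝ} (hV : ContinuousOn V K) {g : X → X}
    (hg : ∀ y ∈ K, g y ∈ K) {γbar γ : ℝ} (hγbar : 0 ≤ γbar) (hγ : γbar < γ)
    (hdec : ∀ y ∈ K, V (g y) ≤ γbar * V y) {μ : ℝ} (hμ : 0 < μ) :
    ∃ η > 0, ∀ x ∈ K, ∀ y ∈ K, ∀ z ∈ K, dist y x ≤ η → dist z (g y) ≤ η →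
      V z ≤ max μ (γ * V x) := by
  have hγpos : 0 < γ := hγbar.trans_lt hγ
  set ε := μ * (γ - γbar) / (γ * (1 + γbar))
  have hε : 0 < ε := by apply div_pos <;> nlinarith
  obtain ⟨η, hη, hVη⟩ :=
    Metric.uniformContinuousOn_iff_le.mp (hK.uniformContinuousOn_of_continuous hV) ε hε
  refine ⟨η, hη, fun x hx y hy z hz hyx hzy => ?_⟩
  have hVy : V y ≤ V x + ε := by
    linarith [abs_le.mp (Real.dist_eq _ _ ▸ hVη y hy x hx hyx)]
  have hVz : V z ≤ V (g y) + ε := by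
    linarith [abs_le.mp (Real.dist_eq _ _ ▸ hVη z hz (g y) (hg y hy) hzy)]
  have hγε : γ * ((1 + γbar) * ε) = μ * (γ - γbar) := by
    simp only [ε]; field_simp
  calc V z ≤ γbar * V x + (1 + γbar) * ε := by
        nlinarith [hdec y hy, mul_le_mul_of_nonneg_left hVy hγbar]
    _ ≤ max μ (γ * V x) := add_le_max_of_mul_le hγbar hγ hγε.le

theorem stmt_16_general {n : ℕ} (K : Set (EuclideanSpace ℝ (Fin n))) (hK : IsCompact K)
    (V : EuclideanSpace ℝ (Fin n) → ℝ) (hVcont : ContinuousOn V K)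
    (A : Matrix (Fin n) (Fin n) ℝ)
    (g : EuclideanSpace ℝ (Fin n) → EuclideanSpace ℝ (Fin n))
    (hg : ∀ y ∈ K, g y ∈ K)
    (γbar : ℝ) (hγbar0 : 0 < γbar)
    (hdec : ∀ y ∈ K, V (g y) ≤ γbar * V y)
    (γ : ℝ) (hγ : γbar < γ ∧ γ < 1) :
    ∀ μ : ℝ, 0 < μ → ∃ δ : ℝ, 0 < δ ∧
      ∀ x ∈ K, ∀ e d : EuclideanSpace ℝ (Fin n), ‖e‖ ≤ δ → ‖d‖ ≤ δ →
        x + e ∈ K →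
        g (x + e) - matVec A e + d ∈ K →
        V (g (x + e) - matVec A e + d) ≤ max μ (γ * V x) := by
  intro μ hμ
  obtain ⟨η, hη, hVη⟩ := hK.exists_pos_forall_le_max_of_dist_le hVcont hg hγbar0.le hγ.1
    hdec hμ
  set C := ‖Matrix.toEuclideanCLM (𝕜 := ℝ) A‖
  have hC : 0 ≤ C := norm_nonneg _
  refine ⟨η / (C + 1), by positivity, fun x hx e d he hd hxe hplus => ?_⟩
  refine hVη x hx (x + e) hxe _ hplus ?_ ?_
  · calc dist (x + e) x = ‖e‖ := by rw [dist_eq_norm, add_sub_cancel_left]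
      _ ≤ η / (C + 1) := he
      _ ≤ η := div_le_self hη.le (by linarith)
  · calc dist (g (x + e) - matVec A e + d) (g (x + e)) = ‖d - matVec A e‖ := by
          rw [dist_eq_norm]; congr 1; abel
      _ ≤ ‖d‖ + C * ‖e‖ := by
          rw [matVec_eq_toEuclideanCLM]
          exact (norm_sub_le _ _).trans (by gcongr; exact ContinuousLinearMap.le_opNorm _ _)
      _ ≤ η / (C + 1) + C * (η / (C + 1)) := by gcongr
      _ = η := by field_simp; ring

/-- (Perturbed decrease of the value function.) Let `K` be compact,
`V` continuous and nonnegative on `K`, and `g` map `K` into `K` with `V(g(y)) ≤ γ̄ V(y)`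
on `K`, `0 < γ̄ < 1`. Fix `γ ∈ (γ̄, 1)`. Then for every `μ > 0` there is `δ > 0` such
that whenever `x ∈ K`, `‖e‖ ≤ δ`, `‖d‖ ≤ δ`, `x + e ∈ K`, and the perturbed successor
`x⁺ = g(x+e) − Ae + d` lies in `K`, one has `V(x⁺) ≤ max{μ, γ V(x)}`. -/
theorem stmt_16 {n : ℕ} (K : Set (EuclideanSpace ℝ (Fin n))) (hK : IsCompact K)
    (V : EuclideanSpace ℝ (Fin n) → ℝ) (hVcont : ContinuousOn V K)
    (hVnonneg : ∀ y ∈ K, 0 ≤ V y)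
    (A : Matrix (Fin n) (Fin n) ℝ)
    (g : EuclideanSpace ℝ (Fin n) → EuclideanSpace ℝ (Fin n))
    (hg : ∀ y ∈ K, g y ∈ K)
    (γbar : ℝ) (hγbar0 : 0 < γbar) (hγbar1 : γbar < 1)
    (hdec : ∀ y ∈ K, V (g y) ≤ γbar * V y)
    (γ : ℝ) (hγ : γbar < γ ∧ γ < 1) :
    ∀ μ : ℝ, 0 < μ → ∃ δ : ℝ, 0 < δ ∧
      ∀ x ∈ K, ∀ e d : EuclideanSpace ℝ (Fin n), ‖e‖ ≤ δ → ‖d‖ ≤ δ →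
        x + e ∈ K →
        g (x + e) - matVec A e + d ∈ K →
        V (g (x + e) - matVec A e + d) ≤ max μ (γ * V x) :=
  stmt_16_general K hK V hVcont A g hg γbar hγbar0 hdec γ hγ
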